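/- For fixed a, b > 0 and fixed τ ∈ (0,1), lim_{ε→0+} I_τ(aε, bε) = b/(a+b). -/

import Mathlib

/-- The incomplete beta function B(x;α,β) = ∫_0^x t^{α−1}(1−t)^{β−1} dt. -/
noncomputable def incBeta (x a b : ℝ) : ℝ :=
  ∫ t in (0 : ℝ)..x, t ^ (a - 1) * (1 - t) ^ (b - 1)

/-- The beta function B(α,β) = Γ(α)Γ(β)/Γ(α+β). -/
noncomputable def betaFn (a b : ℝ) : ℝ :=
  Real.Gamma a * Real.Gamma b / Real.Gamma (a + b)

/-- The regularized incomplete beta function I_x(α,β) = B(x;α,β)/B(α,β). -/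
noncomputable def Ireg (x a b : ℝ) : ℝ := incBeta x a b / betaFn a b

/-!
As `ε → 0⁺`, both `B(τ; aε, bε)` and `B(aε, bε)` blow up like `1/ε`. The mass of
`t^(aε-1) (1-t)^(bε-1)` on `[0, τ]` concentrates at `t = 0`: since `(1-t)^(bε-1)` lies between `1`
and `1 + t/(1-t)`, `ε B(τ; aε, bε)` is squeezed between `τ^(aε)/a` and `τ^(aε)/a + ετ/(1-τ)`, so it
tends to `1/a`. On the other hand `x Γ(x) = Γ(x+1) → 1` gives `ε B(aε, bε) → (a+b)/(ab)`, and the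
quotient of the two limits is `b/(a+b)`.
-/

open Filter MeasureTheory intervalIntegral Topology

lemma integral_rpow_sub_one {α τ : ℝ} (hα : 0 < α) :
    ∫ t in (0 : ℝ)..τ, t ^ (α - 1) = τ ^ α / α := by
  rw [integral_rpow (Or.inl (by linarith)), sub_add_cancel, Real.zero_rpow hα.ne', sub_zero]

lemma intervalIntegrable_incBeta_integrand {α β τ : ℝ} (hα : 0 < α) (hτ : τ < 1) :
    IntervalIntegrable (fun t : ℝ => t ^ (α - 1) * (1 - t) ^ (β - 1)) volume 0 τ := by
  refine (intervalIntegrable_rpow' (by linarith)).mul_continuousOn fun t ht => ?_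
  have : t < 1 := ht.2.trans_lt (max_lt zero_lt_one hτ)
  exact (continuousAt_const.sub continuousAt_id).rpow_const
    (Or.inl (sub_pos.2 this).ne') |>.continuousWithinAt

lemma rpow_div_le_incBeta {α β τ : ℝ} (hα : 0 < α) (hβ : β ≤ 1) (hτ₀ : 0 ≤ τ) (hτ₁ : τ < 1) :
    τ ^ α / α ≤ incBeta τ α β := by
  rw [← integral_rpow_sub_one hα]
  refine integral_mono_on_of_le_Ioo hτ₀ (intervalIntegrable_rpow' (by linarith))
    (intervalIntegrable_incBeta_integrand hα hτ₁) fun t ⟨ht₀, htτ⟩ => ?_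
  exact le_mul_of_one_le_right (Real.rpow_nonneg ht₀.le _)
    (Real.one_le_rpow_of_pos_of_le_one_of_nonpos (by linarith) (by linarith) (by linarith))

lemma incBeta_integrand_le {α β τ t : ℝ} (hα : 0 ≤ α) (hβ : 0 ≤ β) (ht₀ : 0 < t) (htτ : t < τ)
    (hτ : τ < 1) :
    t ^ (α - 1) * (1 - t) ^ (β - 1) ≤ t ^ (α - 1) + 1 / (1 - τ) := by
  have h1t : 0 < 1 - t := by linarith
  calc t ^ (α - 1) * (1 - t) ^ (β - 1) ≤ t ^ (α - 1) * (1 - t) ^ (-1 : ℝ) := by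
        refine mul_le_mul_of_nonneg_left ?_ (Real.rpow_nonneg ht₀.le _)
        exact Real.rpow_le_rpow_of_exponent_ge h1t (by linarith) (by linarith)
    _ = t ^ (α - 1) + t ^ α / (1 - t) := by
        rw [Real.rpow_neg_one, Real.rpow_sub_one ht₀.ne']
        field_simp
        ring
    _ ≤ t ^ (α - 1) + 1 / (1 - τ) := by
        gcongr
        exact Real.rpow_le_one ht₀.le (by linarith) hα

lemma incBeta_le {α β τ : ℝ} (hα : 0 < α) (hβ : 0 ≤ β) (hτ₀ : 0 ≤ τ) (hτ₁ : τ < 1) :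
    incBeta τ α β ≤ τ ^ α / α + τ / (1 - τ) := by
  have hpow : IntervalIntegrable (fun t : ℝ => t ^ (α - 1)) volume 0 τ :=
    intervalIntegrable_rpow' (by linarith)
  have hconst : IntervalIntegrable (fun _ : ℝ => 1 / (1 - τ)) volume 0 τ := intervalIntegrable_const
  calc incBeta τ α β ≤ ∫ t in (0 : ℝ)..τ, (t ^ (α - 1) + 1 / (1 - τ)) :=
        integral_mono_on_of_le_Ioo hτ₀ (intervalIntegrable_incBeta_integrand hα hτ₁)
          (hpow.add hconst) fun t ⟨ht₀, htτ⟩ => incBeta_integrand_le hα.le hβ ht₀ htτ hτ₁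
    _ = τ ^ α / α + τ / (1 - τ) := by
        rw [integral_add hpow hconst, integral_rpow_sub_one hα, intervalIntegral.integral_const, sub_zero,
          smul_eq_mul, mul_one_div]

lemma tendsto_const_rpow_mul_nhdsGT_zero {τ : ℝ} (hτ : 0 < τ) (a : ℝ) :
    Tendsto (fun ε : ℝ => τ ^ (a * ε)) (𝓝[>] 0) (𝓝 1) := by
  have h : Tendsto (fun ε : ℝ => a * ε) (𝓝 0) (𝓝 0) := by
    simpa using (continuous_const_mul a).tendsto 0
  simpa using (tendsto_const_nhds.rpow h (Or.inl hτ.ne')).mono_left nhdsWithin_le_nhds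

lemma tendsto_mul_incBeta {a b τ : ℝ} (ha : 0 < a) (hb : 0 ≤ b) (hτ₀ : 0 < τ) (hτ₁ : τ < 1) :
    Tendsto (fun ε : ℝ => ε * incBeta τ (a * ε) (b * ε)) (𝓝[>] 0) (𝓝 (1 / a)) := by
  have hlower : Tendsto (fun ε : ℝ => τ ^ (a * ε) / a) (𝓝[>] 0) (𝓝 (1 / a)) :=
    (tendsto_const_rpow_mul_nhdsGT_zero hτ₀ a).div_const a
  have hupper : Tendsto (fun ε : ℝ => τ ^ (a * ε) / a + ε * (τ / (1 - τ))) (𝓝[>] 0)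
      (𝓝 (1 / a)) := by
    have h : Tendsto (fun ε : ℝ => ε * (τ / (1 - τ))) (𝓝[>] 0) (𝓝 0) := by
      simpa using ((continuous_mul_const (τ / (1 - τ))).tendsto 0).mono_left nhdsWithin_le_nhds
    simpa using hlower.add h
  have hsmall : ∀ᶠ ε in 𝓝[>] (0 : ℝ), b * ε ≤ 1 := by
    have h : Tendsto (fun ε : ℝ => b * ε) (𝓝[>] 0) (𝓝 0) := by
      simpa using ((continuous_const_mul b).tendsto 0).mono_left nhdsWithin_le_nhds
    exact h.eventually (eventually_le_nhds zero_lt_one)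
  refine tendsto_of_tendsto_of_tendsto_of_le_of_le' hlower hupper ?_ ?_
  · filter_upwards [self_mem_nhdsWithin, hsmall] with ε (hε : 0 < ε) hbε
    calc τ ^ (a * ε) / a = ε * (τ ^ (a * ε) / (a * ε)) := by field_simp
      _ ≤ ε * incBeta τ (a * ε) (b * ε) := by
        gcongr
        exact rpow_div_le_incBeta (by positivity) hbε hτ₀.le hτ₁
  · filter_upwards [self_mem_nhdsWithin] with ε (hε : 0 < ε)
    calc ε * incBeta τ (a * ε) (b * ε)
        ≤ ε * (τ ^ (a * ε) / (a * ε) + τ / (1 - τ)) := by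
          gcongr
          exact incBeta_le (by positivity) (by positivity) hτ₀.le hτ₁
      _ = τ ^ (a * ε) / a + ε * (τ / (1 - τ)) := by field_simp

lemma Real.tendsto_self_mul_Gamma_nhds_zero :
    Tendsto (fun x : ℝ => x * Real.Gamma x) (𝓝[≠] 0) (𝓝 1) := by
  have hcont : ContinuousAt Real.Gamma 1 :=
    (Real.differentiableAt_Gamma fun m => by linarith [(m.cast_nonneg : (0 : ℝ) ≤ m)]).continuousAt
  have h : Tendsto (fun x : ℝ => Real.Gamma (x + 1)) (𝓝 0) (𝓝 1) := by
    simpa [Real.Gamma_one, Function.comp_def] using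
      hcont.tendsto.comp ((continuous_add_const 1).tendsto' 0 1 (zero_add 1))
  refine (h.mono_left nhdsWithin_le_nhds).congr' ?_
  filter_upwards [self_mem_nhdsWithin] with x hx
  exact Real.Gamma_add_one hx

lemma tendsto_const_mul_nhdsNE_zero {c : ℝ} (hc : c ≠ 0) :
    Tendsto (fun ε : ℝ => c * ε) (𝓝[≠] 0) (𝓝[≠] 0) :=
  tendsto_nhdsWithin_of_tendsto_nhds_of_eventually_within _
    (((continuous_const_mul c).tendsto' 0 0 (mul_zero c)).mono_left nhdsWithin_le_nhds)
    (eventually_nhdsWithin_of_forall fun _ hε => mul_ne_zero hc hε)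

lemma mul_betaFn_mul_eq {a b : ℝ} (ha : a ≠ 0) (hb : b ≠ 0) (hab : a + b ≠ 0) {ε : ℝ} (hε : ε ≠ 0) :
    ε * betaFn (a * ε) (b * ε) = a * ε * Real.Gamma (a * ε) * (b * ε * Real.Gamma (b * ε))
      / ((a + b) * ε * Real.Gamma ((a + b) * ε)) * ((a + b) / (a * b)) := by
  rw [betaFn, ← add_mul]
  rcases eq_or_ne (Real.Gamma ((a + b) * ε)) 0 with hΓ | hΓ
  · simp [hΓ]
  · field_simp

lemma tendsto_mul_betaFn {a b : ℝ} (ha : a ≠ 0) (hb : b ≠ 0) (hab : a + b ≠ 0) :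
    Tendsto (fun ε : ℝ => ε * betaFn (a * ε) (b * ε)) (𝓝[≠] 0) (𝓝 ((a + b) / (a * b))) := by
  have hΓ {c : ℝ} (hc : c ≠ 0) :
      Tendsto (fun ε : ℝ => c * ε * Real.Gamma (c * ε)) (𝓝[≠] 0) (𝓝 1) :=
    Real.tendsto_self_mul_Gamma_nhds_zero.comp (tendsto_const_mul_nhdsNE_zero hc)
  have h := (((hΓ ha).mul (hΓ hb)).div (hΓ hab) one_ne_zero).mul_const ((a + b) / (a * b))
  rw [mul_one, div_one, one_mul] at h
  refine h.congr' ?_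
  filter_upwards [self_mem_nhdsWithin] with ε hε
  exact (mul_betaFn_mul_eq ha hb hab hε).symm

/-- For fixed a, b > 0 and τ ∈ (0,1), lim_{ε→0+} I_τ(aε, bε) = b/(a+b). -/
theorem stmt_16 (a b : ℝ) (ha : 0 < a) (hb : 0 < b)
    (τ : ℝ) (hτ : τ ∈ Set.Ioo (0 : ℝ) 1) :
    Filter.Tendsto (fun ε : ℝ => Ireg τ (a * ε) (b * ε))
      (nhdsWithin 0 (Set.Ioi 0)) (nhds (b / (a + b))) := by
  have hinc := tendsto_mul_incBeta ha hb.le hτ.1 hτ.2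
  have hbeta := (tendsto_mul_betaFn ha.ne' hb.ne' (by positivity)).mono_left
    (nhdsWithin_mono 0 fun _ (h : (0 : ℝ) < _) => h.ne')
  have hlim : 1 / a / ((a + b) / (a * b)) = b / (a + b) := by field_simp
  rw [← hlim]
  refine (hinc.div hbeta (by positivity)).congr' ?_
  filter_upwards [self_mem_nhdsWithin] with ε (hε : 0 < ε)
  exact mul_div_mul_left _ _ hε.ne'
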